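/- Let (R, 𝒜) be a measurable space, χ a σ-finite measure on 𝒜, a : R → ℝ and q : R → [0,∞) measurable, and κ a kernel from R to ℝ with ∫_ℝ (|β|² ∧ 1) κ(r,dβ) < ∞ for every r ∈ R. Define a_Θ(r,α) = α a(r) + ∫_ℝ (τ(αβ) − α τ(β)) κ(r,dβ), ζ_Θ(r,α) = ∫_ℝ (|αβ|² ∧ 1) κ(r,dβ) + α² q(r), η_Θ(r,α) = sup_{γ ∈ [−1,1]} |a_Θ(r,αγ)|, and for measurable f : R → ℝ set ι(f) = ∫_R (ζ_Θ(r,|f(r)|) + η_Θ(r,|f(r)|)) χ(dr), an integral with values in [0,∞]. Then for every measurable f : R → ℝ, ι(2f) ≤ 5 ι(f). -/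
import Mathlib
set_option maxHeartbeats 1000000


open MeasureTheory ProbabilityTheory

/-- The truncation function `τ(α) = α` if `|α| ≤ 1` and `τ(α) = α/|α|` otherwise. -/
noncomputable def tau (α : ℝ) : ℝ := if |α| ≤ 1 then α else α / |α|


lemma tau_eq (x : ℝ) : tau x = max (-1) (min x 1) := by
  unfold tau
  rcases le_or_gt |x| 1 with h | h
  · rw [if_pos h]
    rw [abs_le] at h
    rw [min_eq_left h.2, max_eq_right h.1]
  · rw [if_neg (not_le.mpr h)]
    rcases lt_abs.mp h with h1 | h1
    · rw [abs_of_pos (by linarith), div_self (by linarith)]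
      rw [min_eq_right h1.le, max_eq_right (by norm_num)]
    · rw [abs_of_neg (by linarith), div_neg, div_self (by linarith), min_eq_left (by linarith),
        max_eq_left (by linarith)]

lemma tau_cases (y : ℝ) :
    (y ≤ -1 ∧ tau y = -1) ∨ (-1 ≤ y ∧ y ≤ 1 ∧ tau y = y) ∨ (1 ≤ y ∧ tau y = 1) := by
  rw [tau_eq]
  rcases le_total y (-1) with h | h
  · exact Or.inl ⟨h, by rw [min_eq_left (by linarith), max_eq_left h]⟩
  · rcases le_total y 1 with h2 | h2
    · exact Or.inr (Or.inl ⟨h, h2, by rw [min_eq_left h2, max_eq_right h]⟩)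
    · exact Or.inr (Or.inr ⟨h2, by rw [min_eq_right h2, max_eq_right (by linarith)]⟩)

lemma lemA (x : ℝ) : |tau (2 * x) - 2 * tau x| ≤ min (x ^ 2) 1 := by
  rcases tau_cases (2 * x) with ⟨h1, e1⟩ | ⟨h1a, h1b, e1⟩ | ⟨h1, e1⟩ <;>
  rcases tau_cases x with ⟨h2, e2⟩ | ⟨h2a, h2b, e2⟩ | ⟨h2, e2⟩ <;>
  rw [e1, e2] <;>
  refine le_min (abs_le.mpr ⟨?_, ?_⟩) (abs_le.mpr ⟨?_, ?_⟩) <;>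
  nlinarith [sq_nonneg (x - 1), sq_nonneg (x + 1), sq_nonneg x]

lemma lemB (x β : ℝ) : |tau (x * β) - x * tau β| ≤ (2 * x ^ 2 + 2) * min (β ^ 2) 1 := by
  rcases min_cases (β ^ 2) (1 : ℝ) with ⟨e0, l0⟩ | ⟨e0, l0⟩ <;>
  rw [e0] <;>
  rcases tau_cases (x * β) with ⟨h1, e1⟩ | ⟨h1a, h1b, e1⟩ | ⟨h1, e1⟩ <;>
  rcases tau_cases β with ⟨h2, e2⟩ | ⟨h2a, h2b, e2⟩ | ⟨h2, e2⟩ <;>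
  rw [e1, e2] <;>
  refine abs_le.mpr ⟨?_, ?_⟩ <;>
  nlinarith [sq_nonneg (x * β - 1), sq_nonneg (x * β + 1), sq_nonneg (x - 1), sq_nonneg (x + 1),
    sq_nonneg (β - 1), sq_nonneg (β + 1), sq_nonneg (x * β), sq_nonneg x, sq_nonneg β,
    sq_nonneg (x - β), sq_nonneg (x + β)]

lemma tau_measurable : Measurable tau := by
  have : tau = fun x => max (-1) (min x 1) := funext tau_eq
  rw [this]
  exact measurable_const.max (measurable_id.min measurable_const)

lemma min_sq_nonneg (y : ℝ) : 0 ≤ min (y ^ 2) 1 := le_min (sq_nonneg y) zero_le_one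

lemma int_min (μ : Measure ℝ) (hμ : ∫⁻ β, ENNReal.ofReal (min (|β| ^ 2) 1) ∂μ < ⊤) :
    Integrable (fun β => min (β ^ 2) 1) μ := by
  have hm : Measurable fun β : ℝ => min (β ^ 2) 1 :=
    (measurable_id.pow_const 2).min measurable_const
  refine ⟨hm.aestronglyMeasurable, ?_⟩
  rw [hasFiniteIntegral_iff_ofReal (Filter.Eventually.of_forall fun β => min_sq_nonneg β)]
  simpa [sq_abs] using hμ

lemma int_min_scaled (μ : Measure ℝ) (hμ : Integrable (fun β => min (β ^ 2) 1) μ) (c : ℝ) :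
    Integrable (fun β => min ((c * β) ^ 2) 1) μ := by
  refine ((hμ.const_mul (c ^ 2 + 1)).mono
    (((measurable_const_mul c).pow_const 2).min measurable_const).aestronglyMeasurable
    (Filter.Eventually.of_forall fun β => ?_))
  rw [Real.norm_eq_abs, Real.norm_eq_abs, abs_of_nonneg (min_sq_nonneg _),
    abs_of_nonneg (by positivity)]
  rcases le_total (β ^ 2) 1 with h | h
  · calc min ((c * β) ^ 2) 1 ≤ (c * β) ^ 2 := min_le_left _ _
      _ ≤ (c ^ 2 + 1) * min (β ^ 2) 1 := by rw [min_eq_left h]; nlinarith [sq_nonneg β]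
  · calc min ((c * β) ^ 2) 1 ≤ 1 := min_le_right _ _
      _ ≤ (c ^ 2 + 1) * min (β ^ 2) 1 := by rw [min_eq_right h]; nlinarith [sq_nonneg c]

lemma int_g (μ : Measure ℝ) (hμ : Integrable (fun β => min (β ^ 2) 1) μ) (s : ℝ) :
    Integrable (fun β => tau (s * β) - s * tau β) μ := by
  refine (hμ.const_mul (2 * s ^ 2 + 2)).mono
    ((tau_measurable.comp (measurable_const_mul s)).sub
      ((tau_measurable.comp measurable_id).const_mul s)).aestronglyMeasurable
    (Filter.Eventually.of_forall fun β => ?_)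
  simp only [Real.norm_eq_abs]
  exact (lemB s β).trans (le_abs_self _)

noncomputable def aTh (A : ℝ) (μ : Measure ℝ) (s : ℝ) : ℝ :=
  s * A + ∫ β, (tau (s * β) - s * tau β) ∂μ

lemma abs_int_le {μ : Measure ℝ} (f : ℝ → ℝ) : |∫ β, f β ∂μ| ≤ ∫ β, |f β| ∂μ := by
  simpa [Real.norm_eq_abs] using norm_integral_le_integral_norm (μ := μ) f

lemma aTh_double (A : ℝ) (μ : Measure ℝ) (hμ : Integrable (fun β => min (β ^ 2) 1) μ) (s : ℝ) :
    aTh A μ (2 * s) = 2 * aTh A μ s + ∫ β, (tau (2 * (s * β)) - 2 * tau (s * β)) ∂μ := by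
  have hint : Integrable (fun β => tau (2 * (s * β)) - 2 * tau (s * β)) μ := by
    have e : (fun β : ℝ => tau (2 * (s * β)) - 2 * tau (s * β))
        = fun β => (tau (2 * s * β) - 2 * s * tau β) - 2 * (tau (s * β) - s * tau β) := by
      funext β; rw [mul_assoc]; ring
    rw [e]
    exact (int_g μ hμ (2 * s)).sub ((int_g μ hμ s).const_mul 2)
  have e2 : (fun β : ℝ => tau (2 * s * β) - 2 * s * tau β)
      = fun β => 2 * (tau (s * β) - s * tau β) + (tau (2 * (s * β)) - 2 * tau (s * β)) := by
    funext β; rw [mul_assoc]; ring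
  unfold aTh
  rw [e2, integral_add ((int_g μ hμ s).const_mul 2) hint, integral_const_mul]
  ring

lemma pointwise (A Q : ℝ) (hQ : 0 ≤ Q) (μ : Measure ℝ)
    (hμ : ∫⁻ β, ENNReal.ofReal (min (|β| ^ 2) 1) ∂μ < ⊤) (α : ℝ) (hα : 0 ≤ α) :
    ((∫ β, min (|2 * α * β| ^ 2) 1 ∂μ) + (2 * α) ^ 2 * Q)
      + (⨆ γ : Set.Icc (-1 : ℝ) 1, |aTh A μ (2 * α * ↑γ)|)
    ≤ 5 * (((∫ β, min (|α * β| ^ 2) 1 ∂μ) + α ^ 2 * Q)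
      + ⨆ γ : Set.Icc (-1 : ℝ) 1, |aTh A μ (α * ↑γ)|) := by
  haveI : Nonempty (Set.Icc (-1 : ℝ) 1) := ⟨⟨0, by norm_num⟩⟩
  have hK := int_min μ hμ
  simp only [sq_abs]
  set I : ℝ := ∫ β, min ((α * β) ^ 2) 1 ∂μ with hIdef
  have hIα := int_min_scaled μ hK α
  have hI2α := int_min_scaled μ hK (2 * α)
  have hInonneg : 0 ≤ I := integral_nonneg fun β => min_sq_nonneg _
  have step1 : (∫ β, min ((2 * α * β) ^ 2) 1 ∂μ) ≤ 4 * I := by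
    rw [hIdef, ← integral_const_mul]
    refine integral_mono hI2α (hIα.const_mul 4) fun β => ?_
    rcases le_total ((α * β) ^ 2) 1 with h | h
    · rw [min_eq_left h]
      exact (min_le_left _ _).trans (by nlinarith)
    · rw [min_eq_right h]
      exact (min_le_right _ _).trans (by nlinarith)
  have hKnonneg : 0 ≤ ∫ β, min (β ^ 2) 1 ∂μ := integral_nonneg fun β => min_sq_nonneg _
  have habs : ∀ s : ℝ, |s| ≤ α →
      |aTh A μ s| ≤ α * |A| + (2 * α ^ 2 + 2) * ∫ β, min (β ^ 2) 1 ∂μ := by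
    intro s hs
    have h1 : |∫ β, (tau (s * β) - s * tau β) ∂μ|
        ≤ (2 * α ^ 2 + 2) * ∫ β, min (β ^ 2) 1 ∂μ := by
      rw [← integral_const_mul]
      refine (abs_int_le _).trans
        (integral_mono (int_g μ hK s).abs (hK.const_mul _) fun β => ?_)
      refine (lemB s β).trans ?_
      have : s ^ 2 ≤ α ^ 2 := by nlinarith [abs_nonneg s, neg_abs_le s, le_abs_self s]
      nlinarith [min_sq_nonneg β]
    calc |aTh A μ s| ≤ |s * A| + |∫ β, (tau (s * β) - s * tau β) ∂μ| := abs_add_le _ _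
      _ ≤ α * |A| + (2 * α ^ 2 + 2) * ∫ β, min (β ^ 2) 1 ∂μ := by
          rw [abs_mul]
          exact add_le_add (mul_le_mul_of_nonneg_right hs (abs_nonneg A)) h1
  have hγle : ∀ γ : Set.Icc (-1 : ℝ) 1, |α * ↑γ| ≤ α := by
    intro γ
    rw [abs_mul, abs_of_nonneg hα]
    have h1 : |(γ : ℝ)| ≤ 1 := abs_le.mpr ⟨γ.2.1, γ.2.2⟩
    exact mul_le_of_le_one_right hα h1
  have hbdd : BddAbove (Set.range fun γ : Set.Icc (-1 : ℝ) 1 => |aTh A μ (α * ↑γ)|) := by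
    refine ⟨α * |A| + (2 * α ^ 2 + 2) * ∫ β, min (β ^ 2) 1 ∂μ, ?_⟩
    rintro _ ⟨γ, rfl⟩
    exact habs _ (hγle γ)
  set S : ℝ := ⨆ γ : Set.Icc (-1 : ℝ) 1, |aTh A μ (α * ↑γ)| with hSdef
  have hS0 : 0 ≤ S := Real.iSup_nonneg fun γ => abs_nonneg _
  have step2 : (⨆ γ : Set.Icc (-1 : ℝ) 1, |aTh A μ (2 * α * ↑γ)|) ≤ 2 * S + I := by
    refine ciSup_le fun γ => ?_
    have h2s : 2 * α * (γ : ℝ) = 2 * (α * ↑γ) := by ring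
    rw [h2s, aTh_double A μ hK (α * ↑γ)]
    have hEint : Integrable (fun β => tau (2 * (α * ↑γ * β)) - 2 * tau (α * ↑γ * β)) μ := by
      have e : (fun β : ℝ => tau (2 * (α * ↑γ * β)) - 2 * tau (α * ↑γ * β))
          = fun β => (tau (2 * (α * ↑γ) * β) - 2 * (α * ↑γ) * tau β)
            - 2 * (tau (α * ↑γ * β) - α * ↑γ * tau β) := by
        funext β; rw [mul_assoc 2 (α * (γ : ℝ)) β]; ring
      rw [e]
      have hh1 := int_g μ hK (2 * (α * (γ : ℝ)))
      have hh2 := (int_g μ hK (α * (γ : ℝ))).const_mul 2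
      exact hh1.sub hh2
    have hE : |∫ β, (tau (2 * (α * ↑γ * β)) - 2 * tau (α * ↑γ * β)) ∂μ| ≤ I := by
      rw [hIdef]
      refine (abs_int_le _).trans (integral_mono hEint.abs hIα fun β => ?_)
      refine (lemA (α * ↑γ * β)).trans (min_le_min ?_ le_rfl)
      have h1 : |(γ : ℝ)| ≤ 1 := abs_le.mpr ⟨γ.2.1, γ.2.2⟩
      have h2 : (γ : ℝ) ^ 2 ≤ 1 := by nlinarith [abs_nonneg (γ : ℝ), le_abs_self (γ : ℝ), neg_abs_le (γ : ℝ)]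
      have h3 : (α * ↑γ * β) ^ 2 = (γ : ℝ) ^ 2 * (α * β) ^ 2 := by ring
      rw [h3]
      nlinarith [sq_nonneg (α * β)]
    calc |2 * aTh A μ (α * ↑γ) + ∫ β, (tau (2 * (α * ↑γ * β)) - 2 * tau (α * ↑γ * β)) ∂μ|
        ≤ |2 * aTh A μ (α * ↑γ)| + |∫ β, (tau (2 * (α * ↑γ * β)) - 2 * tau (α * ↑γ * β)) ∂μ| :=
          abs_add_le _ _
      _ ≤ 2 * S + I := by
          rw [abs_mul, abs_two]
          exact add_le_add (mul_le_mul_of_nonneg_left (le_ciSup hbdd γ) (by norm_num)) hE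
  have hq2 : 0 ≤ α ^ 2 * Q := mul_nonneg (sq_nonneg α) hQ
  have he : (2 * α) ^ 2 * Q = 4 * (α ^ 2 * Q) := by ring
  linarith [step1, step2]

/-- The Δ₂-condition for the Musielak–Orlicz modular `ι` of the space of deterministic
integrands: `ι(2f) ≤ 5 ι(f)` for every measurable `f : R → ℝ`. -/
theorem modular_delta_two
    {R : Type*} [MeasurableSpace R] (χ : Measure R) [SigmaFinite χ]
    (a q : R → ℝ) (ha : Measurable a) (hq : Measurable q) (hq0 : ∀ r, 0 ≤ q r)
    (κ : Kernel R ℝ)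
    (hκ : ∀ r, ∫⁻ β, ENNReal.ofReal (min (|β| ^ 2) 1) ∂(κ r) < ⊤)
    (aΘ ζΘ ηΘ : R → ℝ → ℝ)
    (haΘ : ∀ r α, aΘ r α = α * a r + ∫ β, (tau (α * β) - α * tau β) ∂(κ r))
    (hζΘ : ∀ r α, ζΘ r α = (∫ β, min (|α * β| ^ 2) 1 ∂(κ r)) + α ^ 2 * q r)
    (hηΘ : ∀ r α, ηΘ r α = ⨆ γ : Set.Icc (-1 : ℝ) 1, |aΘ r (α * γ)|)
    (ι : (R → ℝ) → ENNReal)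
    (hι : ∀ f, ι f = ∫⁻ r, ENNReal.ofReal (ζΘ r |f r| + ηΘ r |f r|) ∂χ)
    (f : R → ℝ) (hf : Measurable f) :
    ι (fun r => 2 * f r) ≤ 5 * ι f := by
  rw [hι, hι]
  have key : ∀ r, ζΘ r |2 * f r| + ηΘ r |2 * f r| ≤ 5 * (ζΘ r |f r| + ηΘ r |f r|) := by
    intro r
    have e2 : |2 * f r| = 2 * |f r| := by rw [abs_mul, abs_two]
    have ea : aΘ r = aTh (a r) (κ r) := funext fun s => haΘ r s
    rw [hζΘ, hζΘ, hηΘ, hηΘ, e2, ea]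
    exact pointwise (a r) (q r) (hq0 r) (κ r) (hκ r) |f r| (abs_nonneg _)
  calc ∫⁻ r, ENNReal.ofReal (ζΘ r |2 * f r| + ηΘ r |2 * f r|) ∂χ
      ≤ ∫⁻ r, 5 * ENNReal.ofReal (ζΘ r |f r| + ηΘ r |f r|) ∂χ := by
        refine lintegral_mono fun r => ?_
        calc ENNReal.ofReal (ζΘ r |2 * f r| + ηΘ r |2 * f r|)
            ≤ ENNReal.ofReal (5 * (ζΘ r |f r| + ηΘ r |f r|)) :=
              ENNReal.ofReal_le_ofReal (key r)
          _ = 5 * ENNReal.ofReal (ζΘ r |f r| + ηΘ r |f r|) := by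
              rw [ENNReal.ofReal_mul (by norm_num : (0:ℝ) ≤ 5)]
              norm_num
    _ = 5 * ∫⁻ r, ENNReal.ofReal (ζΘ r |f r| + ηΘ r |f r|) ∂χ :=
        lintegral_const_mul' 5 _ (by simp)
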